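/- arXiv:1509.01132 — 4 statements merged into one kernel-verified Lean document; each statement's English description precedes it below -/
import Mathlib

section
/- Let H be a Hilbert space, D ⊆ B(H)^d, and F : D → B(H) a function such that whenever x, y ∈ D and T ∈ B(H) satisfies T∘x^i = y^i∘T for all i = 1,…,d, then T∘F(x) = F(y)∘T. If P ∈ B(H) is an orthogonal projection and a, c ∈ D satisfy a^i = P a^i P and c^i = c^i P for all i, then F(a) = P F(a) P + (1-P) F(c) (1-P). -/
/-- If `F : D → B(H)` preserves intertwinings, `P` is an orthogonal
projection, `a = PaP` and `c = cP` with `a, c ∈ D`, then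
`F(a) = P F(a) P + P^⊥ F(c) P^⊥`. -/
theorem stmt0
    {H : Type*} [NormedAddCommGroup H] [InnerProductSpace ℂ H] [CompleteSpace H]
    {d : ℕ} (D : Set (Fin d → H →L[ℂ] H))
    (F : (Fin d → H →L[ℂ] H) → (H →L[ℂ] H))
    (hIP : ∀ x ∈ D, ∀ y ∈ D, ∀ T : H →L[ℂ] H,
      (∀ i, T ∘L x i = y i ∘L T) → T ∘L F x = F y ∘L T)
    (P : H →L[ℂ] H) (hPidem : IsIdempotentElem P) (hPsa : IsSelfAdjoint P)
    (a : Fin d → H →L[ℂ] H) (ha : a ∈ D)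
    (c : Fin d → H →L[ℂ] H) (hc : c ∈ D)
    (haP : ∀ i, a i = P ∘L a i ∘L P)
    (hcP : ∀ i, c i = c i ∘L P) :
    F a = P ∘L F a ∘L P + (1 - P) ∘L F c ∘L (1 - P) := by
  have hP : P * P = P := hPidem
  have ha' : ∀ i, P * (a i * P) = a i := fun i => (haP i).symm
  have hPa : ∀ i, P * a i = a i := by
    intro i
    conv_lhs => rw [← ha' i, ← mul_assoc, hP, ha' i]
  have haPr : ∀ i, a i * P = a i := by
    intro i
    conv_lhs => rw [← ha' i, mul_assoc, mul_assoc, hP, ha' i]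
  have h1 : P ∘L F a = F a ∘L P := by
    refine hIP a ha a ha P fun i => ?_
    show P * a i = a i * P
    rw [hPa, haPr]
  have h2 : (1 - P) ∘L F a = F c ∘L (1 - P) := by
    refine hIP a ha c hc (1 - P) fun i => ?_
    show (1 - P) * a i = c i * (1 - P)
    have hc' : c i * P = c i := (hcP i).symm
    rw [sub_mul, mul_sub, one_mul, mul_one, hPa, hc', sub_self, sub_self]
  have h1' : P * F a = F a * P := h1
  have h2' : (1 - P) * F a = F c * (1 - P) := h2
  show F a = P * (F a * P) + (1 - P) * (F c * (1 - P))
  have hQ : (1 - P) * (1 - P) = 1 - P := by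
    rw [sub_mul, mul_sub, mul_sub, one_mul, one_mul, mul_one, hP]; abel
  calc F a = P * F a + (1 - P) * F a := by rw [sub_mul, one_mul]; abel
    _ = P * (F a * P) + (1 - P) * (F c * (1 - P)) := by
        rw [← h1', ← mul_assoc, hP, ← h2', ← mul_assoc, hQ]
end

section
/- Let K, L be Hilbert spaces, I, J positive integers, and [[α, B],[C, D]] : ℂ ⊕ L^I → ℂ ⊕ L^J an isometry (α ∈ ℂ, B : L^I → ℂ, C : ℂ → L^J, D : L^I → L^J). Let Δ : K^J → K^I be a bounded operator with ‖Δ‖ < 1 and define H = α·I_K + (I_K ⊗ B)(Δ ⊗ I_L)[I - (I_K ⊗ D)(Δ ⊗ I_L)]^{-1}(I_K ⊗ C) ∈ B(K). Then I_K - H*H = Ċ*[I - Δ̇*Ḋ*]^{-1}[I - Δ̇*Δ̇][I - ḊΔ̇]^{-1}Ċ ≥ 0, where Ċ = I_K ⊗ C, Ḋ = I_K ⊗ D, Δ̇ = Δ ⊗ I_L; in particular ‖H‖ ≤ 1. -/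
/-!
Since `1 - D* D = B* B ≥ 0`, `D` is a contraction, so `G = (1 - D Δ)⁻¹` exists. Put
`X = Δ G C`; then `H = α + B X` and `G C = C + D X`, so the column `(H, G C)` is the image of
`(1, X)` under the isometry `[[α, B], [C, D]]`. Comparing Gram operators gives
`H* H + (G C)* (G C) = 1 + X* X`, and `X* X = (G C)* Δ* Δ (G C)` rearranges this to
`1 - H* H = (G C)* (1 - Δ* Δ) (G C)`, which is positive because `‖Δ‖ < 1`.
-/

namespace ContinuousLinearMap

variable {𝕜 K M N : Type*} [RCLike 𝕜]
  [NormedAddCommGroup K] [InnerProductSpace 𝕜 K] [CompleteSpace K]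
  [NormedAddCommGroup M] [InnerProductSpace 𝕜 M] [CompleteSpace M]
  [NormedAddCommGroup N] [InnerProductSpace 𝕜 N] [CompleteSpace N]

theorem isPositive_one_sub_adjoint_comp_self_iff (T : K →L[𝕜] M) :
    (1 - adjoint T ∘L T).IsPositive ↔ ‖T‖ ≤ 1 := by
  have hsa : IsSelfAdjoint (1 - adjoint T ∘L T) :=
    (IsSelfAdjoint.one _).sub (isPositive_adjoint_comp_self T).isSelfAdjoint
  have hre (x : K) : (1 - adjoint T ∘L T).reApplyInnerSelf x = ‖x‖ ^ 2 - ‖T x‖ ^ 2 := by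
    simp [reApplyInnerSelf_apply, inner_sub_left, adjoint_inner_left]
  simp only [isPositive_def', hsa, true_and, hre, sub_nonneg, opNorm_le_iff zero_le_one, one_mul]
  exact forall_congr' fun x => pow_le_pow_iff_left₀ (norm_nonneg _) (norm_nonneg _) two_ne_zero

section Colligation

variable {α : 𝕜} {B : M →L[𝕜] K} {C : K →L[𝕜] N} {D : M →L[𝕜] N}

theorem adjoint_comp_self_add_adjoint_comp_self_of_colligation
    (h₁ : adjoint C ∘L C = (1 - starRingEnd 𝕜 α * α) • (1 : K →L[𝕜] K))
    (h₂ : adjoint C ∘L D = (-starRingEnd 𝕜 α) • B)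
    (h₃ : adjoint B ∘L B + adjoint D ∘L D = 1) (X : K →L[𝕜] M) :
    adjoint (α • 1 + B ∘L X) ∘L (α • 1 + B ∘L X) + adjoint (C + D ∘L X) ∘L (C + D ∘L X) =
      1 + adjoint X ∘L X := by
  have h₂' : adjoint D ∘L C = (-α) • adjoint B := by
    simpa [map_smulₛₗ] using congrArg adjoint h₂
  have e₂ : adjoint C ∘L (D ∘L X) = (-starRingEnd 𝕜 α) • (B ∘L X) := by
    rw [← comp_assoc, h₂, smul_comp]
  have e₂' : adjoint X ∘L (adjoint D ∘L C) = (-α) • (adjoint X ∘L adjoint B) := by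
    rw [h₂', comp_smul]
  have e₃ : adjoint X ∘L (adjoint B ∘L (B ∘L X)) + adjoint X ∘L (adjoint D ∘L (D ∘L X)) =
      adjoint X ∘L X := by
    rw [← comp_add, ← comp_assoc, ← comp_assoc, ← add_comp, h₃, one_def, id_comp]
  simp only [map_add, map_smulₛₗ, adjoint_comp, one_def, adjoint_id, add_comp, comp_add, smul_comp,
    comp_smul, comp_assoc, id_comp, comp_id, h₁, e₂, e₂']
  linear_combination (norm := module) e₃

theorem one_sub_adjoint_comp_self_of_colligation
    (h₁ : adjoint C ∘L C = (1 - starRingEnd 𝕜 α * α) • (1 : K →L[𝕜] K))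
    (h₂ : adjoint C ∘L D = (-starRingEnd 𝕜 α) • B)
    (h₃ : adjoint B ∘L B + adjoint D ∘L D = 1) {Δ : N →L[𝕜] M} {G : N →L[𝕜] N}
    (hG : (1 - D ∘L Δ) ∘L G = 1) :
    1 - adjoint (α • 1 + B ∘L Δ ∘L G ∘L C) ∘L (α • 1 + B ∘L Δ ∘L G ∘L C) =
      adjoint (G ∘L C) ∘L (1 - adjoint Δ ∘L Δ) ∘L (G ∘L C) := by
  have hGC : C + D ∘L Δ ∘L G ∘L C = G ∘L C := by
    have h := congrArg (· ∘L C) hG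
    simp only [sub_comp, one_def, id_comp, comp_assoc, sub_eq_iff_eq_add] at h
    exact h.symm
  have h := adjoint_comp_self_add_adjoint_comp_self_of_colligation h₁ h₂ h₃ (Δ ∘L G ∘L C)
  rw [hGC] at h
  calc _ = adjoint (G ∘L C) ∘L (G ∘L C) - adjoint (Δ ∘L G ∘L C) ∘L (Δ ∘L G ∘L C) := by
        linear_combination (norm := module) (-1 : 𝕜) • h
    _ = _ := by
      simp only [adjoint_comp, comp_sub, sub_comp, one_def, id_comp, comp_assoc]

end Colligation

end ContinuousLinearMap

open ContinuousLinearMap in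
/-- `Bd`, `Cd`, `Dd` stand for the amplified blocks `I_K ⊗ B`, `I_K ⊗ C`, `I_K ⊗ D` (so
`M = K ⊗ L^I`, `N = K ⊗ L^J`), `hcol1`–`hcol3` are the amplified isometry relations, and `Δ`
stands for `Δ ⊗ I_L`. -/
theorem stmt12
    {K M N : Type*}
    [NormedAddCommGroup K] [InnerProductSpace ℂ K] [CompleteSpace K]
    [NormedAddCommGroup M] [InnerProductSpace ℂ M] [CompleteSpace M]
    [NormedAddCommGroup N] [InnerProductSpace ℂ N] [CompleteSpace N]
    (α : ℂ) (Bd : M →L[ℂ] K) (Cd : K →L[ℂ] N) (Dd : M →L[ℂ] N)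
    (hcol1 : adjoint Cd ∘L Cd = ((1 : ℂ) - (starRingEnd ℂ α) * α) • (1 : K →L[ℂ] K))
    (hcol2 : adjoint Cd ∘L Dd = (-(starRingEnd ℂ α)) • Bd)
    (hcol3 : adjoint Bd ∘L Bd + adjoint Dd ∘L Dd = (1 : M →L[ℂ] M))
    (Δ : N →L[ℂ] M) (hΔ : ‖Δ‖ < 1)
    (Hop : K →L[ℂ] K)
    (hHop : Hop = α • (1 : K →L[ℂ] K) +
      Bd ∘L Δ ∘L Ring.inverse ((1 : N →L[ℂ] N) - Dd ∘L Δ) ∘L Cd) :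
    (1 : K →L[ℂ] K) - adjoint Hop ∘L Hop =
        adjoint Cd ∘L
          Ring.inverse ((1 : N →L[ℂ] N) - adjoint Δ ∘L adjoint Dd) ∘L
          ((1 : N →L[ℂ] N) - adjoint Δ ∘L Δ) ∘L
          Ring.inverse ((1 : N →L[ℂ] N) - Dd ∘L Δ) ∘L Cd ∧
      ((1 : K →L[ℂ] K) - adjoint Hop ∘L Hop).IsPositive ∧ ‖Hop‖ ≤ 1 := by
  have hDd : ‖Dd‖ ≤ 1 := by
    rw [← isPositive_one_sub_adjoint_comp_self_iff, ← hcol3, add_sub_cancel_right]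
    exact isPositive_adjoint_comp_self Bd
  have hunit : IsUnit (1 - Dd ∘L Δ) := isUnit_one_sub_of_norm_lt_one <|
    (opNorm_comp_le Dd Δ).trans_lt (mul_lt_one_of_nonneg_of_lt_one_right hDd (norm_nonneg Δ) hΔ)
  have hfact := one_sub_adjoint_comp_self_of_colligation hcol1 hcol2 hcol3
    (Ring.mul_inverse_cancel _ hunit)
  rw [← hHop] at hfact
  have hadj : adjoint (Ring.inverse (1 - Dd ∘L Δ)) = Ring.inverse (1 - adjoint Δ ∘L adjoint Dd) := by
    rw [← star_eq_adjoint, ← Ring.inverse_star, star_sub, star_one, star_eq_adjoint, adjoint_comp]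
  have hpos : (1 - adjoint Hop ∘L Hop).IsPositive := hfact ▸
    ((isPositive_one_sub_adjoint_comp_self_iff Δ).mpr hΔ.le).adjoint_conj _
  refine ⟨by rw [hfact, adjoint_comp, hadj]; simp only [comp_assoc], hpos, ?_⟩
  exact (isPositive_one_sub_adjoint_comp_self_iff Hop).mp hpos
end

section
/- Let D be a balanced open subset of a complex Banach space X, and suppose F : D → Y (Y a complex Banach space) admits on some neighborhood of 0 a representation F(h) = ∑_{k=0}^∞ P_k(h) where each P_k is continuous and homogeneous of degree k, and suppose F is bounded on bounded subsets of D and Fréchet holomorphic on D. Then the series ∑_{k=0}^∞ P_k(x) converges absolutely to F(x) for every x ∈ D. -/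
/-!
Restrict `F` to the complex line through `x`: `ψ(z) = F(z • x)`. Since `D` is open and balanced,
`ψ` is holomorphic on a closed disc of radius `r > 1`, while near `0` homogeneity turns the given
expansion into the power series `ψ(z) = ∑ zᵏ • Pₖ(x)`. By uniqueness this is the Cauchy expansion of
`ψ` on the disc of radius `r`, so it converges absolutely there, in particular at `z = 1`.
-/

open Metric Topology FormalMultilinearSeries

theorem exists_gt_closedBall_subset_of_isOpen {E : Type*} [NormedAddCommGroup E]
    [NormedSpace ℝ E] [ProperSpace E] {U : Set E} {c : E} {ρ : ℝ} (hU : IsOpen U) (hρ : 0 ≤ ρ)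
    (h : closedBall c ρ ⊆ U) : ∃ ρ' > ρ, closedBall c ρ' ⊆ U := by
  obtain ⟨δ, hδ, hδU⟩ := (isCompact_closedBall c ρ).exists_thickening_subset_open hU h
  rw [thickening_closedBall hδ hρ] at hδU
  exact ⟨ρ + δ / 2, by linarith, (closedBall_subset_ball (by linarith)).trans hδU⟩

theorem hasSum_pow_smul_of_differentiableOn_closedBall {E : Type*} [NormedAddCommGroup E]
    [NormedSpace ℂ E] [CompleteSpace E] {ψ : ℂ → E} {a : ℕ → E} {r : ℝ}
    (hψ : DifferentiableOn ℂ ψ (closedBall 0 r))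
    (hloc : ∀ᶠ z in 𝓝 0, HasSum (fun n => z ^ n • a n) (ψ z)) {z : ℂ} (hz : ‖z‖ < r) :
    Summable (fun n => ‖z ^ n • a n‖) ∧ HasSum (fun n => z ^ n • a n) (ψ z) := by
  lift r to NNReal using (norm_nonneg z).trans hz.le
  have hr : 0 < r := by exact_mod_cast (norm_nonneg z).trans_lt hz
  set q : FormalMultilinearSeries ℂ ℂ E :=
    fun n => ContinuousMultilinearMap.mkPiRing ℂ (Fin n) (a n)
  have hcoeff : ∀ n, q.coeff n = a n := by simp [q, coeff]
  have hq : HasFPowerSeriesAt ψ q 0 := hasFPowerSeriesAt_iff.2 (by simpa [hcoeff] using hloc)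
  have hψq : HasFPowerSeriesOnBall ψ q 0 r := by
    have hcauchy := hψ.hasFPowerSeriesOnBall hr
    rwa [hcauchy.hasFPowerSeriesAt.eq_formalMultilinearSeries hq] at hcauchy
  have hzr : z ∈ eball (0 : ℂ) r := by simpa [← ofReal_norm] using hz
  have happly : ∀ n, (q n fun _ => z) = z ^ n • a n := fun n => by
    rw [apply_eq_pow_smul_coeff, hcoeff]
  refine ⟨?_, ?_⟩
  · simpa only [happly] using q.summable_norm_apply (hzr.trans_le hψq.r_le)
  · simpa only [happly, zero_add] using hψq.hasSum hzr

theorem stmt14_general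
    {X Y : Type*} [NormedAddCommGroup X] [NormedSpace ℂ X]
    [NormedAddCommGroup Y] [NormedSpace ℂ Y] [CompleteSpace Y]
    (D : Set X) (hDopen : IsOpen D)
    (hbal : ∀ x ∈ D, ∀ α : ℂ, ‖α‖ ≤ 1 → α • x ∈ D)
    (P : ℕ → X → Y)
    (hPhom : ∀ k (lam : ℂ) (v : X), P k (lam • v) = lam ^ k • P k v)
    (F : X → Y)
    (hFhol : DifferentiableOn ℂ F D)
    (hser : ∃ ε > 0, Metric.ball (0 : X) ε ⊆ D ∧
      ∀ h : X, ‖h‖ < ε → HasSum (fun k : ℕ => P k h) (F h)) :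
    ∀ x ∈ D, Summable (fun k : ℕ => ‖P k x‖) ∧
      HasSum (fun k : ℕ => P k x) (F x) := by
  intro x hx
  obtain ⟨ε, hε, -, hsum⟩ := hser
  obtain ⟨r, hr1, hrD⟩ := exists_gt_closedBall_subset_of_isOpen
    (hDopen.preimage (continuous_id.smul continuous_const)) zero_le_one
    (fun z hz => hbal x hx z (by simpa using hz) : closedBall (0 : ℂ) 1 ⊆ {z | z • x ∈ D})
  have hψ : DifferentiableOn ℂ (fun z : ℂ => F (z • x)) (closedBall 0 r) :=
    hFhol.comp (differentiable_id.smul_const x).differentiableOn hrD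
  have hloc : ∀ᶠ z : ℂ in 𝓝 0, HasSum (fun n => z ^ n • P n x) (F (z • x)) := by
    have hsmall : ∀ᶠ z : ℂ in 𝓝 0, z • x ∈ ball (0 : X) ε := by
      refine ((continuous_id.smul continuous_const).tendsto' (0 : ℂ) (0 : X) ?_).eventually
        (ball_mem_nhds 0 hε)
      simp
    filter_upwards [hsmall] with z hz
    simpa only [hPhom] using hsum _ (mem_ball_zero_iff.1 hz)
  simpa using hasSum_pow_smul_of_differentiableOn_closedBall hψ hloc (z := 1) (by simpa using hr1)

/-- If `D` is a balanced open set in a complex Banach space, `F` is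
Fréchet holomorphic on `D`, bounded on bounded subsets of `D`, and near `0` is the sum
of a series of continuous `k`-homogeneous maps `P_k`, then `∑ P_k(x)` converges
absolutely to `F(x)` for every `x ∈ D`. -/
theorem stmt14
    {X Y : Type*} [NormedAddCommGroup X] [NormedSpace ℂ X] [CompleteSpace X]
    [NormedAddCommGroup Y] [NormedSpace ℂ Y] [CompleteSpace Y]
    (D : Set X) (hDopen : IsOpen D)
    (hbal : ∀ x ∈ D, ∀ α : ℂ, ‖α‖ ≤ 1 → α • x ∈ D)
    (P : ℕ → X → Y) (hPcont : ∀ k, Continuous (P k))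
    (hPhom : ∀ k (lam : ℂ) (v : X), P k (lam • v) = lam ^ k • P k v)
    (F : X → Y)
    (hFhol : DifferentiableOn ℂ F D)
    (hFbdd : ∀ C : ℝ, ∃ M : ℝ, ∀ x ∈ D, ‖x‖ ≤ C → ‖F x‖ ≤ M)
    (hser : ∃ ε > 0, Metric.ball (0 : X) ε ⊆ D ∧
      ∀ h : X, ‖h‖ < ε → HasSum (fun k : ℕ => P k h) (F h)) :
    ∀ x ∈ D, Summable (fun k : ℕ => ‖P k x‖) ∧
      HasSum (fun k : ℕ => P k x) (F x) :=
  stmt14_general D hDopen hbal P hPhom F hFhol hser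
end

section
/- Let H be a Hilbert space, D ⊆ B(H)^d an open set, and F : D → B(H) a Gâteaux differentiable function that is intertwining preserving. Then for every k ≥ 1, the k-th directional derivative map G^k(h^0, h^1, …, h^k) = D^k F(h^0)[h^1, …, h^k], defined by iterated limits of difference quotients, is intertwining preserving as a function on D × (B(H)^d)^k: if T intertwines (h^0,…,h^k) with (g^0,…,g^k) coordinatewise and both tuples are in the domain, then T G^k(h) = G^k(g) T. -/
open Filter in
/-- The iterated Gâteaux (directional) derivatives of an intertwining
preserving function are themselves intertwining preserving.  Here
`G k a h = D^k F(a)[h 1, …, h k]` is encoded by the inductive difference-quotient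
characterization `hGsucc`, with `G 0 a h = F a`. -/
theorem stmt17
    {H : Type*} [NormedAddCommGroup H] [InnerProductSpace ℂ H] [CompleteSpace H]
    {d : ℕ} (D : Set (Fin d → H →L[ℂ] H)) (hDopen : IsOpen D)
    (F : (Fin d → H →L[ℂ] H) → (H →L[ℂ] H))
    (hIP : ∀ x ∈ D, ∀ y ∈ D, ∀ T : H →L[ℂ] H,
      (∀ i, T ∘L x i = y i ∘L T) → T ∘L F x = F y ∘L T)
    (G : ℕ → (Fin d → H →L[ℂ] H) → (ℕ → Fin d → H →L[ℂ] H) → (H →L[ℂ] H))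
    (hG0 : ∀ a h, G 0 a h = F a)
    (hGsucc : ∀ (k : ℕ) (a : Fin d → H →L[ℂ] H), a ∈ D →
      ∀ h : ℕ → Fin d → H →L[ℂ] H,
        Tendsto (fun t : ℂ => t⁻¹ • (G k (a + t • h (k + 1)) h - G k a h))
          (nhdsWithin (0 : ℂ) {(0 : ℂ)}ᶜ) (nhds (G (k + 1) a h))) :
    ∀ k : ℕ, ∀ a ∈ D, ∀ b ∈ D, ∀ h g : ℕ → Fin d → H →L[ℂ] H, ∀ T : H →L[ℂ] H,
      (∀ i, T ∘L a i = b i ∘L T) →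
      (∀ j i, T ∘L h j i = g j i ∘L T) →
      T ∘L G k a h = G k b g ∘L T := by
  intro k
  induction k with
  | zero =>
    intro a ha b hb h g T hab hhg
    simpa [hG0] using hIP a ha b hb T hab
  | succ k ih =>
    intro a ha b hb h g T hab hhg
    -- eventually a + t • h (k+1) ∈ D and b + t • g (k+1) ∈ D
    have hcontA : Tendsto (fun t : ℂ => a + t • h (k + 1)) (nhds 0) (nhds a) := by
      have : Continuous (fun t : ℂ => a + t • h (k + 1)) :=
        continuous_const.add (continuous_id.smul continuous_const)
      simpa using this.tendsto 0
    have hcontB : Tendsto (fun t : ℂ => b + t • g (k + 1)) (nhds 0) (nhds b) := by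
      have : Continuous (fun t : ℂ => b + t • g (k + 1)) :=
        continuous_const.add (continuous_id.smul continuous_const)
      simpa using this.tendsto 0
    have hA : ∀ᶠ t : ℂ in nhds 0, a + t • h (k + 1) ∈ D :=
      hcontA.eventually (hDopen.eventually_mem ha)
    have hB : ∀ᶠ t : ℂ in nhds 0, b + t • g (k + 1) ∈ D :=
      hcontB.eventually (hDopen.eventually_mem hb)
    -- T composed with the difference quotient tends to T ∘L G (k+1) a h
    have hTcont : Continuous (fun X : H →L[ℂ] H => T ∘L X) :=
      (ContinuousLinearMap.compL ℂ H H H T).continuous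
    have hTcont' : Continuous (fun X : H →L[ℂ] H => X ∘L T) :=
      ((ContinuousLinearMap.compL ℂ H H H).flip T).continuous
    have h1 : Tendsto
        (fun t : ℂ => T ∘L (t⁻¹ • (G k (a + t • h (k + 1)) h - G k a h)))
        (nhdsWithin (0 : ℂ) {(0 : ℂ)}ᶜ) (nhds (T ∘L G (k + 1) a h)) :=
      (hTcont.tendsto _).comp (hGsucc k a ha h)
    have h2 : Tendsto
        (fun t : ℂ => (t⁻¹ • (G k (b + t • g (k + 1)) g - G k b g)) ∘L T)
        (nhdsWithin (0 : ℂ) {(0 : ℂ)}ᶜ) (nhds (G (k + 1) b g ∘L T)) :=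
      (hTcont'.tendsto _).comp (hGsucc k b hb g)
    -- the two functions eventually coincide
    have heq : ∀ᶠ t : ℂ in nhdsWithin (0 : ℂ) {(0 : ℂ)}ᶜ,
        T ∘L (t⁻¹ • (G k (a + t • h (k + 1)) h - G k a h))
          = (t⁻¹ • (G k (b + t • g (k + 1)) g - G k b g)) ∘L T := by
      filter_upwards [nhdsWithin_le_nhds hA, nhdsWithin_le_nhds hB] with t htA htB
      have hint : ∀ i, T ∘L (a + t • h (k + 1)) i = (b + t • g (k + 1)) i ∘L T := by
        intro i
        simp only [Pi.add_apply, Pi.smul_apply]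
        rw [ContinuousLinearMap.comp_add, ContinuousLinearMap.add_comp,
          ContinuousLinearMap.comp_smul, ContinuousLinearMap.smul_comp,
          hab i, hhg (k + 1) i]
      have e1 : T ∘L G k (a + t • h (k + 1)) h = G k (b + t • g (k + 1)) g ∘L T :=
        ih _ htA _ htB h g T hint hhg
      have e2 : T ∘L G k a h = G k b g ∘L T := ih a ha b hb h g T hab hhg
      rw [ContinuousLinearMap.comp_smul, ContinuousLinearMap.smul_comp,
        ContinuousLinearMap.comp_sub, ContinuousLinearMap.sub_comp, e1, e2]
    exact tendsto_nhds_unique (h1.congr' heq) h2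
end
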